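/- Let G = (X_L, X_R ∪ U, E) be a bipartite graph in which X_L is partitioned into r+1 disjoint subsets X_L^{C_1}, …, X_L^{C_{r+1}} and U is partitioned into r+1 disjoint subsets U^{C_1}, …, U^{C_{r+1}} (r ≥ 0), and E = E_XX ∪ E_1 ∪ … ∪ E_{r+1}, where E_XX is a set of edges between X_L and X_R and, for each i, E_i is a set of edges between X_L^{C_i} and U^{C_i}. Then the augmented incidence matrix M of G is totally unimodular. -/
import Mathlib


/-- The side of a vertex in the bipartite graph `G = (X_L, X_R ∪ U, E)`. -/
inductive BipSide : Type
  | XL  -- a vertex of `X_L`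
  | XR  -- a vertex of `X_R`
  | UU  -- a vertex of `U`
deriving DecidableEq

/-- A bipartite graph `G = (X_L, X_R ∪ U, E)` with `n_V` vertices and `n_E` edges, in which
`X_L` is partitioned into `r + 1` disjoint subsets `X_L^{C_1}, …, X_L^{C_{r+1}}` and `U` is
partitioned into `r + 1` disjoint subsets `U^{C_1}, …, U^{C_{r+1}}`, and
`E = E_XX ∪ E_1 ∪ ⋯ ∪ E_{r+1}`, where `E_XX` is a set of edges between `X_L` and `X_R` and,
for each `i`, `E_i` is a set of edges between `X_L^{C_i}` and `U^{C_i}`.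
Vertices are written `v_1, …, v_{n_V}` (i.e. indexed by `Fin nV`) and edges `e_1, …, e_{n_E}`
(indexed by `Fin nE`).  `side v` tells which of `X_L`, `X_R`, `U` the vertex `v` lies in;
`group v` tells which cell `C_i` of the partition a vertex of `X_L` (resp. of `U`) lies in;
`endL e` and `endR e` are the two endpoints of the edge `e` (in `X_L` and in `X_R ∪ U`
respectively); `eClass e = none` means `e ∈ E_XX` while `eClass e = some i` means `e ∈ E_{i+1}`. -/
structure SCCBipartite (nV nE r : ℕ) : Type where
  side : Fin nV → BipSide
  group : Fin nV → Fin (r + 1)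
  endL : Fin nE → Fin nV
  endR : Fin nE → Fin nV
  eClass : Fin nE → Option (Fin (r + 1))
  endL_XL : ∀ e, side (endL e) = BipSide.XL
  eXX_mem : ∀ e, eClass e = none → side (endR e) = BipSide.XR
  eI_mem : ∀ e i, eClass e = some i →
    side (endR e) = BipSide.UU ∧ group (endL e) = i ∧ group (endR e) = i
  edge_inj : Function.Injective fun e => (endL e, endR e)

/-- The augmented incidence matrix `M` of such a bipartite graph: an
`(n_V + r) × (n_E + r)` integer matrix with `M i j = 1` if `i ≤ n_V`, `j ≤ n_E` and `v_i` is an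
endpoint of `e_j`; `M i j = -1` if `i > n_V` and `e_j ∈ E_{i - n_V}`; `M i j = 1` if `i > n_V`
and `j = n_E + i - n_V`; and `M i j = 0` otherwise. -/
def augM {nV nE r : ℕ} (G : SCCBipartite nV nE r) : Matrix (Fin (nV + r)) (Fin (nE + r)) ℤ :=
  Matrix.of fun i j =>
    if hi : (i : ℕ) < nV then
      if hj : (j : ℕ) < nE then
        (if G.endL ⟨j, hj⟩ = ⟨i, hi⟩ ∨ G.endR ⟨j, hj⟩ = ⟨i, hi⟩ then 1 else 0)
      else 0
    else
      if hj : (j : ℕ) < nE then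
        (if G.eClass ⟨j, hj⟩ = some ⟨(i : ℕ) - nV, by have := i.isLt; omega⟩ then -1 else 0)
      else (if (i : ℕ) - nV = (j : ℕ) - nE then 1 else 0)


private lemma signRange_iff {x : ℤ} : x ∈ Set.range SignType.cast ↔ x = -1 ∨ x = 0 ∨ x = 1 := by
  constructor
  · rintro ⟨s, rfl⟩
    cases s <;> simp
  · rintro (rfl | rfl | rfl)
    exacts [⟨SignType.neg, by simp⟩, ⟨SignType.zero, by simp⟩, ⟨SignType.pos, by simp⟩]

/-- The sign assigned to each row of the augmented incidence matrix, relative to a support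
given by the function `y` pulled back along `f`. -/
private def ghSign {nV nE r k : ℕ} (G : SCCBipartite nV nE r) (f : Fin k → Fin (nV + r))
    (y : Fin k → ℤ) (v : Fin (nV + r)) : ℤ :=
  if hv : (v : ℕ) < nV then
    if G.side ⟨(v : ℕ), hv⟩ = BipSide.XR then -1
    else if G.side ⟨(v : ℕ), hv⟩ = BipSide.UU then
      if (G.group ⟨(v : ℕ), hv⟩ : ℕ) < r then
        (if ∃ i, ((f i) : ℕ) = nV + (G.group ⟨(v : ℕ), hv⟩ : ℕ) ∧ y i ≠ 0 then 1 else -1)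
      else -1
    else 1
  else 1

private lemma ghSign_unit {nV nE r k : ℕ} (G : SCCBipartite nV nE r) (f : Fin k → Fin (nV + r))
    (y : Fin k → ℤ) (v : Fin (nV + r)) : ghSign G f y v = 1 ∨ ghSign G f y v = -1 := by
  unfold ghSign
  split_ifs <;> simp

private lemma ghSign_extra {nV nE r k : ℕ} (G : SCCBipartite nV nE r) (f : Fin k → Fin (nV + r))
    (y : Fin k → ℤ) (v : Fin (nV + r)) (hv : ¬ ((v : ℕ) < nV)) : ghSign G f y v = 1 := by
  unfold ghSign
  rw [dif_neg hv]

private lemma ghSign_vertex {nV nE r k : ℕ} (G : SCCBipartite nV nE r) (f : Fin k → Fin (nV + r))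
    (y : Fin k → ℤ) (a : Fin nV) (h : (a : ℕ) < nV + r) :
    ghSign G f y ⟨(a : ℕ), h⟩ =
      if G.side a = BipSide.XR then -1
      else if G.side a = BipSide.UU then
        if (G.group a : ℕ) < r then
          (if ∃ i, ((f i) : ℕ) = nV + (G.group a : ℕ) ∧ y i ≠ 0 then 1 else -1)
        else -1
      else 1 := by
  unfold ghSign
  rw [dif_pos (show ((⟨(a : ℕ), h⟩ : Fin (nV + r)) : ℕ) < nV from a.isLt)]

set_option maxHeartbeats 1600000 in
private lemma gh_bound {nV nE r k : ℕ} (G : SCCBipartite nV nE r)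
    (f : Fin k → Fin (nV + r)) (hf : Function.Injective f) (y : Fin k → ℤ) :
    ∃ z : Fin k → ℤ,
      (∀ i, y i ≠ 0 → z i = 1 ∨ z i = -1) ∧ (∀ i, y i = 0 → z i = 0) ∧
      ∀ c : Fin (nE + r),
        (∑ i, z i * augM G (f i) c) = -1 ∨ (∑ i, z i * augM G (f i) c) = 0 ∨
        (∑ i, z i * augM G (f i) c) = 1 := by
  classical
  refine ⟨fun i => if y i ≠ 0 then ghSign G f y (f i) else 0,
    fun i hi => by
      show (if y i ≠ 0 then ghSign G f y (f i) else 0) = 1 ∨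
        (if y i ≠ 0 then ghSign G f y (f i) else 0) = -1
      rw [if_pos hi]; exact ghSign_unit G f y (f i),
    fun i hi => by simp [hi], ?_⟩
  set z : Fin k → ℤ := fun i => if y i ≠ 0 then ghSign G f y (f i) else 0 with hzdef
  -- collapsing indicator sums
  have hsum : ∀ v : Fin (nV + r),
      (∑ i, if f i = v then z i else 0) =
      (if ∃ i, f i = v ∧ y i ≠ 0 then ghSign G f y v else 0) := by
    intro v
    by_cases hex : ∃ i₀, f i₀ = v
    · obtain ⟨i₀, rfl⟩ := hex
      rw [Finset.sum_eq_single i₀ (fun b _ hb => if_neg fun hfb => hb (hf hfb)) (by simp),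
        if_pos rfl]
      by_cases hy0 : y i₀ ≠ 0
      · rw [hzdef]
        simp only []
        rw [if_pos hy0, if_pos ⟨i₀, rfl, hy0⟩]
      · have hne : ¬ ∃ i, f i = f i₀ ∧ y i ≠ 0 := by
          rintro ⟨i₁, h1, h2⟩
          exact h2 (by rw [hf h1]; exact not_not.mp hy0)
        rw [hzdef]
        simp only []
        rw [if_neg hy0, if_neg hne]
    · rw [Finset.sum_eq_zero fun i _ => if_neg fun h => hex ⟨i, h⟩,
        if_neg fun ⟨i₀, h, _⟩ => hex ⟨i₀, h⟩]
  intro c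
  by_cases hc : (c : ℕ) < nE
  · rcases heq : G.eClass ⟨(c : ℕ), hc⟩ with _ | cls
    · -- an edge of E_XX
      have hsideL := G.endL_XL ⟨(c : ℕ), hc⟩
      have hsideR := G.eXX_mem ⟨(c : ℕ), hc⟩ heq
      have hab : G.endL ⟨(c : ℕ), hc⟩ ≠ G.endR ⟨(c : ℕ), hc⟩ := by
        intro h
        rw [h, hsideR] at hsideL
        exact absurd hsideL (by simp)
      have hpt : ∀ i, z i * augM G (f i) c =
          (if f i = (⟨(G.endL ⟨(c : ℕ), hc⟩ : ℕ), by
              have := (G.endL ⟨(c : ℕ), hc⟩).isLt; omega⟩ : Fin (nV + r)) then z i else 0) +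
          (if f i = (⟨(G.endR ⟨(c : ℕ), hc⟩ : ℕ), by
              have := (G.endR ⟨(c : ℕ), hc⟩).isLt; omega⟩ : Fin (nV + r)) then z i else 0) := by
        intro i
        by_cases hv : ((f i) : ℕ) < nV
        · have hentry : augM G (f i) c =
              if G.endL ⟨(c : ℕ), hc⟩ = ⟨((f i) : ℕ), hv⟩ ∨
                 G.endR ⟨(c : ℕ), hc⟩ = ⟨((f i) : ℕ), hv⟩ then 1 else 0 := by
            simp only [augM, Matrix.of_apply]
            rw [dif_pos hv, dif_pos hc]
          by_cases hL : G.endL ⟨(c : ℕ), hc⟩ = ⟨((f i) : ℕ), hv⟩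
          · have h1 : f i = (⟨(G.endL ⟨(c : ℕ), hc⟩ : ℕ), by
                have := (G.endL ⟨(c : ℕ), hc⟩).isLt; omega⟩ : Fin (nV + r)) := by
              have := congrArg Fin.val hL
              simp only [Fin.val_mk] at this
              apply Fin.ext
              simp only [Fin.val_mk]
              omega
            have h2 : f i ≠ (⟨(G.endR ⟨(c : ℕ), hc⟩ : ℕ), by
                have := (G.endR ⟨(c : ℕ), hc⟩).isLt; omega⟩ : Fin (nV + r)) := by
              intro h
              apply hab
              have h1v := congrArg Fin.val h1
              have h2v := congrArg Fin.val h
              simp only [Fin.val_mk] at h1v h2v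
              apply Fin.ext
              omega
            rw [hentry, if_pos (Or.inl hL), mul_one, if_pos h1, if_neg h2, add_zero]
          · by_cases hR : G.endR ⟨(c : ℕ), hc⟩ = ⟨((f i) : ℕ), hv⟩
            · have h1 : f i ≠ (⟨(G.endL ⟨(c : ℕ), hc⟩ : ℕ), by
                  have := (G.endL ⟨(c : ℕ), hc⟩).isLt; omega⟩ : Fin (nV + r)) := by
                intro h
                apply hL
                have hv2 := congrArg Fin.val h
                simp only [Fin.val_mk] at hv2
                apply Fin.ext
                simp only [Fin.val_mk]
                omega
              have h2 : f i = (⟨(G.endR ⟨(c : ℕ), hc⟩ : ℕ), by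
                  have := (G.endR ⟨(c : ℕ), hc⟩).isLt; omega⟩ : Fin (nV + r)) := by
                have := congrArg Fin.val hR
                simp only [Fin.val_mk] at this
                apply Fin.ext
                simp only [Fin.val_mk]
                omega
              rw [hentry, if_pos (Or.inr hR), mul_one, if_pos h2, if_neg h1, zero_add]
            · have h1 : f i ≠ (⟨(G.endL ⟨(c : ℕ), hc⟩ : ℕ), by
                  have := (G.endL ⟨(c : ℕ), hc⟩).isLt; omega⟩ : Fin (nV + r)) := by
                intro h
                apply hL
                have hv2 := congrArg Fin.val h
                simp only [Fin.val_mk] at hv2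
                apply Fin.ext
                simp only [Fin.val_mk]
                omega
              have h2 : f i ≠ (⟨(G.endR ⟨(c : ℕ), hc⟩ : ℕ), by
                  have := (G.endR ⟨(c : ℕ), hc⟩).isLt; omega⟩ : Fin (nV + r)) := by
                intro h
                apply hR
                have hv2 := congrArg Fin.val h
                simp only [Fin.val_mk] at hv2
                apply Fin.ext
                simp only [Fin.val_mk]
                omega
              rw [hentry, if_neg (by tauto), mul_zero, if_neg h1, if_neg h2, add_zero]
        · have hentry : augM G (f i) c = 0 := by
            simp only [augM, Matrix.of_apply]
            rw [dif_neg hv, dif_pos hc, if_neg (by rw [heq]; simp)]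
          have h1 : f i ≠ (⟨(G.endL ⟨(c : ℕ), hc⟩ : ℕ), by
              have := (G.endL ⟨(c : ℕ), hc⟩).isLt; omega⟩ : Fin (nV + r)) := by
            intro h
            have hv2 := congrArg Fin.val h
            simp only [Fin.val_mk] at hv2
            have := (G.endL ⟨(c : ℕ), hc⟩).isLt
            omega
          have h2 : f i ≠ (⟨(G.endR ⟨(c : ℕ), hc⟩ : ℕ), by
              have := (G.endR ⟨(c : ℕ), hc⟩).isLt; omega⟩ : Fin (nV + r)) := by
            intro h
            have hv2 := congrArg Fin.val h
            simp only [Fin.val_mk] at hv2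
            have := (G.endR ⟨(c : ℕ), hc⟩).isLt
            omega
          rw [hentry, mul_zero, if_neg h1, if_neg h2, add_zero]
      rw [Finset.sum_congr rfl fun i _ => hpt i, Finset.sum_add_distrib, hsum, hsum]
      have hga : ghSign G f y (⟨(G.endL ⟨(c : ℕ), hc⟩ : ℕ), by
          have := (G.endL ⟨(c : ℕ), hc⟩).isLt; omega⟩ : Fin (nV + r)) = 1 := by
        rw [ghSign_vertex, if_neg (by rw [hsideL]; simp), if_neg (by rw [hsideL]; simp)]
      have hgb : ghSign G f y (⟨(G.endR ⟨(c : ℕ), hc⟩ : ℕ), by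
          have := (G.endR ⟨(c : ℕ), hc⟩).isLt; omega⟩ : Fin (nV + r)) = -1 := by
        rw [ghSign_vertex, if_pos hsideR]
      rw [hga, hgb]
      split_ifs <;> norm_num
    · -- an edge of E_cls
      have hsideL := G.endL_XL ⟨(c : ℕ), hc⟩
      obtain ⟨hUU, hgL, hgR⟩ := G.eI_mem ⟨(c : ℕ), hc⟩ cls heq
      have hab : G.endL ⟨(c : ℕ), hc⟩ ≠ G.endR ⟨(c : ℕ), hc⟩ := by
        intro h
        rw [h, hUU] at hsideL
        exact absurd hsideL (by simp)
      have hLfacts : ∀ i (hv : ((f i) : ℕ) < nV),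
          (G.endL ⟨(c : ℕ), hc⟩ = ⟨((f i) : ℕ), hv⟩ ↔
            f i = (⟨(G.endL ⟨(c : ℕ), hc⟩ : ℕ), by
              have := (G.endL ⟨(c : ℕ), hc⟩).isLt; omega⟩ : Fin (nV + r))) := by
        intro i hv
        rw [Fin.ext_iff, Fin.ext_iff]
        simp only [Fin.val_mk]
        omega
      have hRfacts : ∀ i (hv : ((f i) : ℕ) < nV),
          (G.endR ⟨(c : ℕ), hc⟩ = ⟨((f i) : ℕ), hv⟩ ↔
            f i = (⟨(G.endR ⟨(c : ℕ), hc⟩ : ℕ), by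
              have := (G.endR ⟨(c : ℕ), hc⟩).isLt; omega⟩ : Fin (nV + r))) := by
        intro i hv
        rw [Fin.ext_iff, Fin.ext_iff]
        simp only [Fin.val_mk]
        omega
      have hraneqrb : (⟨(G.endL ⟨(c : ℕ), hc⟩ : ℕ), by
            have := (G.endL ⟨(c : ℕ), hc⟩).isLt; omega⟩ : Fin (nV + r)) ≠
          (⟨(G.endR ⟨(c : ℕ), hc⟩ : ℕ), by
            have := (G.endR ⟨(c : ℕ), hc⟩).isLt; omega⟩ : Fin (nV + r)) := by
        intro h
        apply hab
        rw [Fin.ext_iff] at h ⊢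
        simpa using h
      by_cases hr : (cls : ℕ) < r
      · have hpt : ∀ i, z i * augM G (f i) c =
            (if f i = (⟨(G.endL ⟨(c : ℕ), hc⟩ : ℕ), by
                have := (G.endL ⟨(c : ℕ), hc⟩).isLt; omega⟩ : Fin (nV + r)) then z i else 0) +
            (if f i = (⟨(G.endR ⟨(c : ℕ), hc⟩ : ℕ), by
                have := (G.endR ⟨(c : ℕ), hc⟩).isLt; omega⟩ : Fin (nV + r)) then z i else 0) -
            (if f i = (⟨nV + (cls : ℕ), by omega⟩ : Fin (nV + r)) then z i else 0) := by
          intro i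
          by_cases hv : ((f i) : ℕ) < nV
          · have hentry : augM G (f i) c =
                if G.endL ⟨(c : ℕ), hc⟩ = ⟨((f i) : ℕ), hv⟩ ∨
                   G.endR ⟨(c : ℕ), hc⟩ = ⟨((f i) : ℕ), hv⟩ then 1 else 0 := by
              simp only [augM, Matrix.of_apply]
              rw [dif_pos hv, dif_pos hc]
            have hnx : f i ≠ (⟨nV + (cls : ℕ), by omega⟩ : Fin (nV + r)) := by
              intro h
              rw [Fin.ext_iff] at h
              simp only [Fin.val_mk] at h
              omega
            rw [hentry, if_neg hnx, sub_zero]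
            by_cases hL : G.endL ⟨(c : ℕ), hc⟩ = ⟨((f i) : ℕ), hv⟩
            · have h2 : f i ≠ (⟨(G.endR ⟨(c : ℕ), hc⟩ : ℕ), by
                  have := (G.endR ⟨(c : ℕ), hc⟩).isLt; omega⟩ : Fin (nV + r)) := by
                rw [← (hLfacts i hv).mp hL] at hraneqrb
                exact hraneqrb
              rw [if_pos (Or.inl hL), mul_one, if_pos ((hLfacts i hv).mp hL), if_neg h2, add_zero]
            · by_cases hR : G.endR ⟨(c : ℕ), hc⟩ = ⟨((f i) : ℕ), hv⟩
              · have h1 : f i ≠ _ := fun h => hL ((hLfacts i hv).mpr h)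
                rw [if_pos (Or.inr hR), mul_one, if_pos ((hRfacts i hv).mp hR), if_neg h1,
                  zero_add]
              · have h1 : f i ≠ _ := fun h => hL ((hLfacts i hv).mpr h)
                have h2 : f i ≠ _ := fun h => hR ((hRfacts i hv).mpr h)
                rw [if_neg (by tauto), mul_zero, if_neg h1, if_neg h2, add_zero]
          · have h1 : f i ≠ (⟨(G.endL ⟨(c : ℕ), hc⟩ : ℕ), by
                have := (G.endL ⟨(c : ℕ), hc⟩).isLt; omega⟩ : Fin (nV + r)) := by
              intro h
              rw [Fin.ext_iff] at h
              simp only [Fin.val_mk] at h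
              have := (G.endL ⟨(c : ℕ), hc⟩).isLt
              omega
            have h2 : f i ≠ (⟨(G.endR ⟨(c : ℕ), hc⟩ : ℕ), by
                have := (G.endR ⟨(c : ℕ), hc⟩).isLt; omega⟩ : Fin (nV + r)) := by
              intro h
              rw [Fin.ext_iff] at h
              simp only [Fin.val_mk] at h
              have := (G.endR ⟨(c : ℕ), hc⟩).isLt
              omega
            rw [if_neg h1, if_neg h2, add_zero, zero_sub]
            by_cases hx : f i = (⟨nV + (cls : ℕ), by omega⟩ : Fin (nV + r))
            · have hentry : augM G (f i) c = -1 := by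
                simp only [augM, Matrix.of_apply]
                rw [dif_neg hv, dif_pos hc, if_pos]
                rw [heq]
                refine congrArg some (Fin.ext ?_)
                rw [Fin.ext_iff] at hx
                simp only [Fin.val_mk] at hx ⊢
                omega
              rw [hentry, if_pos hx]
              ring
            · have hentry : augM G (f i) c = 0 := by
                simp only [augM, Matrix.of_apply]
                rw [dif_neg hv, dif_pos hc, if_neg]
                rw [heq]
                intro h
                rw [Option.some_inj, Fin.ext_iff] at h
                simp only [Fin.val_mk] at h
                apply hx
                rw [Fin.ext_iff]
                simp only [Fin.val_mk]
                omega
              rw [hentry, if_neg hx, mul_zero, neg_zero]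
        rw [Finset.sum_congr rfl fun i _ => hpt i, Finset.sum_sub_distrib,
          Finset.sum_add_distrib, hsum, hsum, hsum]
        have hga : ghSign G f y (⟨(G.endL ⟨(c : ℕ), hc⟩ : ℕ), by
            have := (G.endL ⟨(c : ℕ), hc⟩).isLt; omega⟩ : Fin (nV + r)) = 1 := by
          rw [ghSign_vertex, if_neg (by rw [hsideL]; simp), if_neg (by rw [hsideL]; simp)]
        have hgx : ghSign G f y (⟨nV + (cls : ℕ), by omega⟩ : Fin (nV + r)) = 1 :=
          ghSign_extra G f y _ (by simp only [Fin.val_mk]; omega)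
        have hgb : ghSign G f y (⟨(G.endR ⟨(c : ℕ), hc⟩ : ℕ), by
            have := (G.endR ⟨(c : ℕ), hc⟩).isLt; omega⟩ : Fin (nV + r)) =
            if ∃ i, ((f i) : ℕ) = nV + (cls : ℕ) ∧ y i ≠ 0 then 1 else -1 := by
          rw [ghSign_vertex, if_neg (by rw [hUU]; simp), if_pos hUU, hgR, if_pos hr]
        have hiff : (∃ i, f i = (⟨nV + (cls : ℕ), by omega⟩ : Fin (nV + r)) ∧ y i ≠ 0) ↔
            (∃ i, ((f i) : ℕ) = nV + (cls : ℕ) ∧ y i ≠ 0) := by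
          constructor
          · rintro ⟨i, h1, h2⟩
            refine ⟨i, ?_, h2⟩
            rw [h1]
          · rintro ⟨i, h1, h2⟩
            refine ⟨i, Fin.ext ?_, h2⟩
            simp only [Fin.val_mk]
            omega
        rw [hga, hgb, hgx]
        by_cases hexS : ∃ i, ((f i) : ℕ) = nV + (cls : ℕ) ∧ y i ≠ 0
        · rw [if_pos (hiff.mpr hexS), if_pos hexS]
          split_ifs <;> norm_num
        · rw [if_neg (fun h => hexS (hiff.mp h)), if_neg hexS]
          split_ifs <;> norm_num
      · -- class with no extra row
        have hpt : ∀ i, z i * augM G (f i) c =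
            (if f i = (⟨(G.endL ⟨(c : ℕ), hc⟩ : ℕ), by
                have := (G.endL ⟨(c : ℕ), hc⟩).isLt; omega⟩ : Fin (nV + r)) then z i else 0) +
            (if f i = (⟨(G.endR ⟨(c : ℕ), hc⟩ : ℕ), by
                have := (G.endR ⟨(c : ℕ), hc⟩).isLt; omega⟩ : Fin (nV + r)) then z i else 0) := by
          intro i
          by_cases hv : ((f i) : ℕ) < nV
          · have hentry : augM G (f i) c =
                if G.endL ⟨(c : ℕ), hc⟩ = ⟨((f i) : ℕ), hv⟩ ∨
                   G.endR ⟨(c : ℕ), hc⟩ = ⟨((f i) : ℕ), hv⟩ then 1 else 0 := by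
              simp only [augM, Matrix.of_apply]
              rw [dif_pos hv, dif_pos hc]
            by_cases hL : G.endL ⟨(c : ℕ), hc⟩ = ⟨((f i) : ℕ), hv⟩
            · have h2 : f i ≠ (⟨(G.endR ⟨(c : ℕ), hc⟩ : ℕ), by
                  have := (G.endR ⟨(c : ℕ), hc⟩).isLt; omega⟩ : Fin (nV + r)) := by
                rw [← (hLfacts i hv).mp hL] at hraneqrb
                exact hraneqrb
              rw [hentry, if_pos (Or.inl hL), mul_one, if_pos ((hLfacts i hv).mp hL),
                if_neg h2, add_zero]
            · by_cases hR : G.endR ⟨(c : ℕ), hc⟩ = ⟨((f i) : ℕ), hv⟩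
              · have h1 : f i ≠ _ := fun h => hL ((hLfacts i hv).mpr h)
                rw [hentry, if_pos (Or.inr hR), mul_one, if_pos ((hRfacts i hv).mp hR),
                  if_neg h1, zero_add]
              · have h1 : f i ≠ _ := fun h => hL ((hLfacts i hv).mpr h)
                have h2 : f i ≠ _ := fun h => hR ((hRfacts i hv).mpr h)
                rw [hentry, if_neg (by tauto), mul_zero, if_neg h1, if_neg h2, add_zero]
          · have hentry : augM G (f i) c = 0 := by
              simp only [augM, Matrix.of_apply]
              rw [dif_neg hv, dif_pos hc, if_neg]
              rw [heq]
              intro h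
              rw [Option.some_inj, Fin.ext_iff] at h
              simp only [Fin.val_mk] at h
              have := (f i).isLt
              omega
            have h1 : f i ≠ (⟨(G.endL ⟨(c : ℕ), hc⟩ : ℕ), by
                have := (G.endL ⟨(c : ℕ), hc⟩).isLt; omega⟩ : Fin (nV + r)) := by
              intro h
              rw [Fin.ext_iff] at h
              simp only [Fin.val_mk] at h
              have := (G.endL ⟨(c : ℕ), hc⟩).isLt
              omega
            have h2 : f i ≠ (⟨(G.endR ⟨(c : ℕ), hc⟩ : ℕ), by
                have := (G.endR ⟨(c : ℕ), hc⟩).isLt; omega⟩ : Fin (nV + r)) := by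
              intro h
              rw [Fin.ext_iff] at h
              simp only [Fin.val_mk] at h
              have := (G.endR ⟨(c : ℕ), hc⟩).isLt
              omega
            rw [hentry, mul_zero, if_neg h1, if_neg h2, add_zero]
        rw [Finset.sum_congr rfl fun i _ => hpt i, Finset.sum_add_distrib, hsum, hsum]
        have hga : ghSign G f y (⟨(G.endL ⟨(c : ℕ), hc⟩ : ℕ), by
            have := (G.endL ⟨(c : ℕ), hc⟩).isLt; omega⟩ : Fin (nV + r)) = 1 := by
          rw [ghSign_vertex, if_neg (by rw [hsideL]; simp), if_neg (by rw [hsideL]; simp)]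
        have hgb : ghSign G f y (⟨(G.endR ⟨(c : ℕ), hc⟩ : ℕ), by
            have := (G.endR ⟨(c : ℕ), hc⟩).isLt; omega⟩ : Fin (nV + r)) = -1 := by
          rw [ghSign_vertex, if_neg (by rw [hUU]; simp), if_pos hUU, hgR, if_neg hr]
        rw [hga, hgb]
        split_ifs <;> norm_num
  · -- a unit column
    have hcr : (c : ℕ) - nE < r := by have := c.isLt; omega
    have hpt : ∀ i, z i * augM G (f i) c =
        (if f i = (⟨nV + ((c : ℕ) - nE), by omega⟩ : Fin (nV + r)) then z i else 0) := by
      intro i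
      by_cases hv : ((f i) : ℕ) < nV
      · have hentry : augM G (f i) c = 0 := by
          simp only [augM, Matrix.of_apply]
          rw [dif_pos hv, dif_neg hc]
        rw [hentry, mul_zero, if_neg]
        intro h
        have := congrArg Fin.val h
        simp only [Fin.val_mk] at this
        omega
      · by_cases hx : f i = (⟨nV + ((c : ℕ) - nE), by omega⟩ : Fin (nV + r))
        · have hval : ((f i) : ℕ) - nV = (c : ℕ) - nE := by
            have := congrArg Fin.val hx
            simp only [Fin.val_mk] at this
            omega
          have hentry : augM G (f i) c = 1 := by
            simp only [augM, Matrix.of_apply]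
            rw [dif_neg hv, dif_neg hc, if_pos hval]
          rw [hentry, mul_one, if_pos hx]
        · have hval : ¬ (((f i) : ℕ) - nV = (c : ℕ) - nE) := by
            intro h
            apply hx
            apply Fin.ext
            simp only [Fin.val_mk]
            omega
          have hentry : augM G (f i) c = 0 := by
            simp only [augM, Matrix.of_apply]
            rw [dif_neg hv, dif_neg hc, if_neg hval]
          rw [hentry, mul_zero, if_neg hx]
    rw [Finset.sum_congr rfl fun i _ => hpt i, hsum]
    split_ifs with h
    · rcases ghSign_unit G f y ⟨nV + ((c : ℕ) - nE), by omega⟩ with h1 | h1 <;> rw [h1] <;> tauto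
    · tauto

private lemma neg_one_pow_mul3 (n : ℕ) (x : ℤ) (hx : x = -1 ∨ x = 0 ∨ x = 1) :
    (-1 : ℤ) ^ n * x = -1 ∨ (-1 : ℤ) ^ n * x = 0 ∨ (-1 : ℤ) ^ n * x = 1 := by
  rcases Nat.even_or_odd n with h | h
  · rw [h.neg_one_pow]
    rcases hx with h' | h' | h' <;> rw [h'] <;> norm_num
  · rw [h.neg_one_pow]
    rcases hx with h' | h' | h' <;> rw [h'] <;> norm_num

set_option maxHeartbeats 1600000 in
/-- Proposition 1: the augmented incidence matrix `M` is totally unimodular. -/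
theorem augM_isTotallyUnimodular {nV nE r : ℕ} (G : SCCBipartite nV nE r) :
    (augM G).IsTotallyUnimodular := by
  rw [Matrix.isTotallyUnimodular_iff]
  intro k
  induction k using Nat.strong_induction_on with
  | _ k ih =>
    cases k with
    | zero =>
      intro f g
      exact ⟨1, by simp [Matrix.det_fin_zero]⟩
    | succ m =>
      intro f g
      rw [signRange_iff]
      by_cases hf : Function.Injective f
      swap
      · obtain ⟨i, j, hij, hne⟩ := Function.not_injective_iff.mp hf
        refine Or.inr (Or.inl (Matrix.det_zero_of_row_eq hne ?_))
        ext c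
        simp [Matrix.submatrix_apply, hij]
      by_cases hg : Function.Injective g
      swap
      · obtain ⟨i, j, hij, hne⟩ := Function.not_injective_iff.mp hg
        refine Or.inr (Or.inl (Matrix.det_zero_of_column_eq hne fun l => ?_))
        simp [Matrix.submatrix_apply, hij]
      -- all entries of the adjugate of the submatrix are 0 or ±1
      have hadj : ∀ i j : Fin (m + 1),
          ((augM G).submatrix f g).adjugate i j = -1 ∨
          ((augM G).submatrix f g).adjugate i j = 0 ∨
          ((augM G).submatrix f g).adjugate i j = 1 := by
        intro i j
        rw [Matrix.adjugate_apply, Matrix.det_succ_row _ j]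
        rw [Finset.sum_eq_single_of_mem i (Finset.mem_univ i) (fun c _ hci => by
          rw [Matrix.updateRow_self, Pi.single_apply, if_neg hci, mul_zero, zero_mul])]
        have hsub : ((((augM G).submatrix f g).updateRow j (Pi.single i 1)).submatrix
            j.succAbove i.succAbove) =
            (augM G).submatrix (f ∘ j.succAbove) (g ∘ i.succAbove) := by
          ext a b
          simp [Matrix.submatrix_apply, Matrix.updateRow_ne (Fin.succAbove_ne j a)]
        rw [Matrix.updateRow_self, Pi.single_eq_same, mul_one, hsub]
        exact neg_one_pow_mul3 _ _ (signRange_iff.mp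
          (ih m (Nat.lt_succ_self m) (f ∘ j.succAbove) (g ∘ i.succAbove)))
      by_cases hd0 : ((augM G).submatrix f g).det = 0
      · exact Or.inr (Or.inl hd0)
      -- the first row of the adjugate, viewed as a row combination
      have h_yB : ∀ c : Fin (m + 1),
          (∑ i, ((augM G).submatrix f g).adjugate 0 i * augM G (f i) (g c)) =
          if (0 : Fin (m + 1)) = c then ((augM G).submatrix f g).det else 0 := by
        intro c
        have h := congrFun (congrFun (Matrix.adjugate_mul ((augM G).submatrix f g)) 0) c
        rw [Matrix.mul_apply] at h
        simp only [Matrix.submatrix_apply] at h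
        rw [h, Matrix.smul_apply, Matrix.one_apply]
        split_ifs <;> simp
      have hyne : ∃ i, ((augM G).submatrix f g).adjugate 0 i ≠ 0 := by
        by_contra hall
        push_neg at hall
        apply hd0
        have h0 := h_yB 0
        rw [if_pos rfl] at h0
        rw [← h0]
        refine Finset.sum_eq_zero fun i _ => ?_
        rw [hall i, zero_mul]
      obtain ⟨z, hz1, hz0, hzcol⟩ :=
        gh_bound G f hf (fun i => ((augM G).submatrix f g).adjugate 0 i)
      -- z annihilates all columns except column 0
      have hzB : ∀ c : Fin (m + 1), c ≠ 0 → (∑ i, z i * augM G (f i) (g c)) = 0 := by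
        intro c hc
        have hdvd : (2 : ℤ) ∣
            ((if (0 : Fin (m + 1)) = c then ((augM G).submatrix f g).det else 0) -
              ∑ i, z i * augM G (f i) (g c)) := by
          rw [← h_yB c, ← Finset.sum_sub_distrib]
          refine Finset.dvd_sum fun i _ => ?_
          rw [← sub_mul]
          refine Dvd.dvd.mul_right ?_ _
          by_cases hyi : ((augM G).submatrix f g).adjugate 0 i = 0
          · rw [hyi, hz0 i hyi, sub_zero]
            exact dvd_zero 2
          · rcases hadj 0 i with h | h | h <;> rcases hz1 i hyi with h' | h' <;>
              first
                | exact absurd h hyi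
                | (rw [h, h']; norm_num)
        rw [if_neg (fun h => hc h.symm), zero_sub, dvd_neg] at hdvd
        rcases hzcol (g c) with h | h | h <;> rw [h] at hdvd <;> omega
      -- the key identity  det * z l = (column-0 sum) * y l
      have hkey : ∀ l : Fin (m + 1),
          ((augM G).submatrix f g).det * z l =
          (∑ i, z i * augM G (f i) (g 0)) * ((augM G).submatrix f g).adjugate 0 l := by
        intro l
        have h1 : (∑ c : Fin (m + 1), (∑ i, z i * augM G (f i) (g c)) *
            ((augM G).submatrix f g).adjugate c l) =
            (∑ i, z i * augM G (f i) (g 0)) * ((augM G).submatrix f g).adjugate 0 l := by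
          refine Finset.sum_eq_single_of_mem 0 (Finset.mem_univ _) fun c _ hc => ?_
          rw [hzB c hc, zero_mul]
        rw [← h1]
        have h2 : ∀ i : Fin (m + 1),
            (∑ c, augM G (f i) (g c) * ((augM G).submatrix f g).adjugate c l) =
            if i = l then ((augM G).submatrix f g).det else 0 := by
          intro i
          have h := congrFun (congrFun (Matrix.mul_adjugate ((augM G).submatrix f g)) i) l
          rw [Matrix.mul_apply] at h
          simp only [Matrix.submatrix_apply] at h
          rw [h, Matrix.smul_apply, Matrix.one_apply]
          split_ifs <;> simp
        symm
        calc ∑ c : Fin (m + 1), (∑ i, z i * augM G (f i) (g c)) *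
              ((augM G).submatrix f g).adjugate c l
            = ∑ c : Fin (m + 1), ∑ i, z i *
              (augM G (f i) (g c) * ((augM G).submatrix f g).adjugate c l) := by
              refine Finset.sum_congr rfl fun c _ => ?_
              rw [Finset.sum_mul]
              refine Finset.sum_congr rfl fun i _ => ?_
              ring
          _ = ∑ i, ∑ c : Fin (m + 1), z i *
              (augM G (f i) (g c) * ((augM G).submatrix f g).adjugate c l) :=
              Finset.sum_comm
          _ = ∑ i, z i * (if i = l then ((augM G).submatrix f g).det else 0) := by
              refine Finset.sum_congr rfl fun i _ => ?_
              rw [← Finset.mul_sum, h2 i]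
          _ = ((augM G).submatrix f g).det * z l := by
              have hpt : ∀ i : Fin (m + 1),
                  z i * (if i = l then ((augM G).submatrix f g).det else 0) =
                  if i = l then ((augM G).submatrix f g).det * z i else 0 := by
                intro i
                split_ifs
                · ring
                · rw [mul_zero]
              rw [Finset.sum_congr rfl fun i _ => hpt i,
                Finset.sum_ite_eq' Finset.univ l
                  (fun i => ((augM G).submatrix f g).det * z i),
                if_pos (Finset.mem_univ l)]
      obtain ⟨i0, hi0⟩ := hyne
      have hk := hkey i0
      rcases hz1 i0 hi0 with h | h <;>
        rcases hzcol (g 0) with hw | hw | hw <;>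
        rcases hadj 0 i0 with hy | hy | hy <;>
        rw [h, hw, hy] at hk <;> omega
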